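/- Let δ : (0, 1/2] → [0, ∞) be a bounded function with bound M, let ε : (0, 1/2] → [0, ∞) satisfy ∫_0^{1/2} ε(ρ)² ρ^{-1} dρ < ∞, and let C > 0 and α > 0 be constants. Suppose that δ(ρ) ≤ C ( ρ^α δ(2ρ) + ε(ρ) ) for all ρ ∈ (0, 1/4]. Then ∫_0^{1/2} δ(ρ)² ρ^{-1} dρ < ∞; more precisely ∫_0^{1/4} δ(ρ)² ρ^{-1} dρ ≤ 2C² ( M²/(2α) · (1/4)^{2α} + ∫_0^{1/4} ε(ρ)² ρ^{-1} dρ ). -/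

import Mathlib

open MeasureTheory

/-!
Inserting the crude bound `δ(2ρ) ≤ M` into the recurrence and squaring with
`(a + b)² ≤ 2 (a² + b²)` gives `δ(ρ)²/ρ ≤ 2C² (M² ρ^{2α-1} + ε(ρ)²/ρ)` on `(0, r]`, `r = 1/4`; since
`∫_0^r ρ^{2α-1} dρ = r^{2α}/(2α)`, this is the integral bound. On `(r, 2r]` the weight `1/ρ` is
bounded, so `δ²/ρ ≤ M²/r` there and the integral over `(0, 2r]` is finite.
-/

open Set

lemma sq_mul_inv_le_of_le_mul_rpow_mul_add {C α M ρ d d' e : ℝ} (hC : 0 ≤ C) (hρ : 0 < ρ)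
    (hd : 0 ≤ d) (hd' : d' ≤ M) (h : d ≤ C * (ρ ^ α * d' + e)) :
    d ^ 2 * ρ⁻¹ ≤ 2 * C ^ 2 * (M ^ 2 * ρ ^ (2 * α - 1) + e ^ 2 * ρ⁻¹) := by
  have hdM : d ≤ C * (ρ ^ α * M + e) := h.trans <| by gcongr
  have hsq : d ^ 2 ≤ 2 * C ^ 2 * ((ρ ^ α) ^ 2 * M ^ 2 + e ^ 2) :=
    calc d ^ 2 ≤ (C * (ρ ^ α * M + e)) ^ 2 := pow_le_pow_left₀ hd hdM 2
      _ = C ^ 2 * (ρ ^ α * M + e) ^ 2 := by ring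
      _ ≤ C ^ 2 * (2 * ((ρ ^ α * M) ^ 2 + e ^ 2)) := by gcongr; exact add_sq_le
      _ = 2 * C ^ 2 * ((ρ ^ α) ^ 2 * M ^ 2 + e ^ 2) := by ring
  have hpow : (ρ ^ α) ^ 2 * ρ⁻¹ = ρ ^ (2 * α - 1) := by
    rw [← Real.rpow_natCast, ← Real.rpow_mul hρ.le, Real.rpow_sub hρ, Real.rpow_one,
      div_eq_mul_inv, mul_comm α]
    norm_num
  calc d ^ 2 * ρ⁻¹ ≤ 2 * C ^ 2 * ((ρ ^ α) ^ 2 * M ^ 2 + e ^ 2) * ρ⁻¹ := by gcongr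
    _ = 2 * C ^ 2 * (M ^ 2 * ((ρ ^ α) ^ 2 * ρ⁻¹) + e ^ 2 * ρ⁻¹) := by ring
    _ = 2 * C ^ 2 * (M ^ 2 * ρ ^ (2 * α - 1) + e ^ 2 * ρ⁻¹) := by rw [hpow]

lemma lintegral_Ioc_rpow_sub_one {s r : ℝ} (hs : 0 < s) (hr : 0 ≤ r) :
    ∫⁻ ρ in Ioc 0 r, ENNReal.ofReal (ρ ^ (s - 1)) = ENNReal.ofReal (r ^ s / s) := by
  have hint : IntegrableOn (fun ρ : ℝ => ρ ^ (s - 1)) (Ioc 0 r) :=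
    (intervalIntegrable_iff_integrableOn_Ioc_of_le hr).1 <|
      intervalIntegral.intervalIntegrable_rpow' (by linarith)
  rw [← ofReal_integral_eq_lintegral_ofReal hint
    (ae_restrict_of_forall_mem measurableSet_Ioc fun ρ hρ => Real.rpow_nonneg hρ.1.le _),
    ← intervalIntegral.integral_of_le hr, integral_rpow (Or.inl (by linarith)), sub_add_cancel,
    Real.zero_rpow hs.ne', sub_zero]

section Recurrence

variable {δ ε : ℝ → ℝ} {C α M r : ℝ}

theorem lintegral_sq_mul_inv_le_of_le_mul_rpow_add (hC : 0 ≤ C) (hα : 0 < α) (hr : 0 ≤ r)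
    (hδ0 : ∀ ρ ∈ Ioc 0 r, 0 ≤ δ ρ) (hδM : ∀ ρ ∈ Ioc 0 r, δ (2 * ρ) ≤ M)
    (hrec : ∀ ρ ∈ Ioc 0 r, δ ρ ≤ C * (ρ ^ α * δ (2 * ρ) + ε ρ)) :
    ∫⁻ ρ in Ioc 0 r, ENNReal.ofReal (δ ρ ^ 2 * ρ⁻¹)
      ≤ ENNReal.ofReal (2 * C ^ 2) * (ENNReal.ofReal (M ^ 2 / (2 * α) * r ^ (2 * α)) +
          ∫⁻ ρ in Ioc 0 r, ENNReal.ofReal (ε ρ ^ 2 * ρ⁻¹)) := by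
  have hM2 : 0 ≤ M ^ 2 := sq_nonneg M
  calc ∫⁻ ρ in Ioc 0 r, ENNReal.ofReal (δ ρ ^ 2 * ρ⁻¹)
      ≤ ∫⁻ ρ in Ioc 0 r, ENNReal.ofReal (2 * C ^ 2) *
          (ENNReal.ofReal (M ^ 2) * ENNReal.ofReal (ρ ^ (2 * α - 1)) +
            ENNReal.ofReal (ε ρ ^ 2 * ρ⁻¹)) := by
        refine setLIntegral_mono' measurableSet_Ioc fun ρ hρ => ?_
        rw [← ENNReal.ofReal_mul hM2]
        refine (ENNReal.ofReal_le_ofReal <| sq_mul_inv_le_of_le_mul_rpow_mul_add hC hρ.1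
          (hδ0 ρ hρ) (hδM ρ hρ) (hrec ρ hρ)).trans ?_
        rw [ENNReal.ofReal_mul (by positivity)]
        gcongr
        exact ENNReal.ofReal_add_le
    _ = ENNReal.ofReal (2 * C ^ 2) * (ENNReal.ofReal (M ^ 2 / (2 * α) * r ^ (2 * α)) +
          ∫⁻ ρ in Ioc 0 r, ENNReal.ofReal (ε ρ ^ 2 * ρ⁻¹)) := by
        rw [lintegral_const_mul' _ _ ENNReal.ofReal_ne_top,
          lintegral_add_left (by fun_prop), lintegral_const_mul' _ _ ENNReal.ofReal_ne_top,
          lintegral_Ioc_rpow_sub_one (by positivity) hr, ← ENNReal.ofReal_mul hM2,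
          mul_div_assoc', div_mul_eq_mul_div]

lemma setLIntegral_Ioc_sq_mul_inv_lt_top {a b : ℝ} (ha : 0 < a)
    (hδ0 : ∀ ρ ∈ Ioc a b, 0 ≤ δ ρ) (hδM : ∀ ρ ∈ Ioc a b, δ ρ ≤ M) :
    ∫⁻ ρ in Ioc a b, ENNReal.ofReal (δ ρ ^ 2 * ρ⁻¹) < ⊤ :=
  setLIntegral_lt_top_of_le_nnreal measure_Ioc_lt_top.ne ⟨(M ^ 2 * a⁻¹).toNNReal, fun ρ hρ =>
    ENNReal.ofReal_le_ofReal <| mul_le_mul (pow_le_pow_left₀ (hδ0 ρ hρ) (hδM ρ hρ) 2)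
      (inv_anti₀ ha hρ.1.le) (inv_nonneg.2 (ha.trans hρ.1).le) (sq_nonneg M)⟩

end Recurrence

theorem stmt3_general (δ ε : ℝ → ℝ) (C α M : ℝ) (hC : 0 < C) (hα : 0 < α)
    (hδ0 : ∀ ρ ∈ Set.Ioc (0 : ℝ) (1/2), 0 ≤ δ ρ)
    (hδM : ∀ ρ ∈ Set.Ioc (0 : ℝ) (1/2), δ ρ ≤ M)
    (hεint : ∫⁻ ρ in Set.Ioc (0 : ℝ) (1/2), ENNReal.ofReal ((ε ρ) ^ 2 * ρ⁻¹) < ⊤)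
    (hrec : ∀ ρ ∈ Set.Ioc (0 : ℝ) (1/4), δ ρ ≤ C * (ρ ^ α * δ (2 * ρ) + ε ρ)) :
    (∫⁻ ρ in Set.Ioc (0 : ℝ) (1/2), ENNReal.ofReal ((δ ρ) ^ 2 * ρ⁻¹) < ⊤) ∧
      ∫⁻ ρ in Set.Ioc (0 : ℝ) (1/4), ENNReal.ofReal ((δ ρ) ^ 2 * ρ⁻¹)
        ≤ ENNReal.ofReal (2 * C ^ 2) *
            (ENNReal.ofReal (M ^ 2 / (2 * α) * (1/4 : ℝ) ^ (2 * α)) +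
              ∫⁻ ρ in Set.Ioc (0 : ℝ) (1/4), ENNReal.ofReal ((ε ρ) ^ 2 * ρ⁻¹)) := by
  have hbound := lintegral_sq_mul_inv_le_of_le_mul_rpow_add hC.le hα (by norm_num)
    (fun ρ hρ => hδ0 ρ (Ioc_subset_Ioc_right (by norm_num) hρ))
    (fun ρ hρ => hδM _ ⟨by linarith [hρ.1], by linarith [hρ.2]⟩) hrec
  have hε : ∫⁻ ρ in Ioc (0 : ℝ) (1/4), ENNReal.ofReal (ε ρ ^ 2 * ρ⁻¹) < ⊤ :=
    (lintegral_mono_set (Ioc_subset_Ioc_right (by norm_num))).trans_lt hεint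
  refine ⟨?_, hbound⟩
  rw [← Ioc_union_Ioc_eq_Ioc (by norm_num : (0 : ℝ) ≤ 1/4) (by norm_num : (1/4 : ℝ) ≤ 1/2)]
  refine (lintegral_union_le _ _ _).trans_lt (ENNReal.add_lt_top.2 ⟨?_, ?_⟩)
  · exact hbound.trans_lt <| ENNReal.mul_lt_top ENNReal.ofReal_lt_top <|
      ENNReal.add_lt_top.2 ⟨ENNReal.ofReal_lt_top, hε⟩
  · have hsub : Ioc (1/4 : ℝ) (1/2) ⊆ Ioc 0 (1/2) := Ioc_subset_Ioc_left (by norm_num)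
    exact setLIntegral_Ioc_sq_mul_inv_lt_top (by norm_num)
      (fun ρ hρ => hδ0 ρ (hsub hρ)) (fun ρ hρ => hδM ρ (hsub hρ))

/-- If `δ : (0,1/2] → [0,∞)` is bounded by `M`,
`∫_0^{1/2} ε(ρ)² ρ⁻¹ dρ < ∞`, and `δ(ρ) ≤ C (ρ^α δ(2ρ) + ε(ρ))` on `(0,1/4]` with
`C, α > 0`, then `∫_0^{1/2} δ(ρ)² ρ⁻¹ dρ < ∞`, and more precisely
`∫_0^{1/4} δ² ρ⁻¹ dρ ≤ 2C² (M²/(2α) (1/4)^{2α} + ∫_0^{1/4} ε² ρ⁻¹ dρ)`. -/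
theorem stmt3 (δ ε : ℝ → ℝ) (C α M : ℝ) (hC : 0 < C) (hα : 0 < α)
    (hδ0 : ∀ ρ ∈ Set.Ioc (0 : ℝ) (1/2), 0 ≤ δ ρ)
    (hδM : ∀ ρ ∈ Set.Ioc (0 : ℝ) (1/2), δ ρ ≤ M)
    (hε0 : ∀ ρ ∈ Set.Ioc (0 : ℝ) (1/2), 0 ≤ ε ρ)
    (hεint : ∫⁻ ρ in Set.Ioc (0 : ℝ) (1/2), ENNReal.ofReal ((ε ρ) ^ 2 * ρ⁻¹) < ⊤)
    (hrec : ∀ ρ ∈ Set.Ioc (0 : ℝ) (1/4), δ ρ ≤ C * (ρ ^ α * δ (2 * ρ) + ε ρ)) :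
    (∫⁻ ρ in Set.Ioc (0 : ℝ) (1/2), ENNReal.ofReal ((δ ρ) ^ 2 * ρ⁻¹) < ⊤) ∧
      ∫⁻ ρ in Set.Ioc (0 : ℝ) (1/4), ENNReal.ofReal ((δ ρ) ^ 2 * ρ⁻¹)
        ≤ ENNReal.ofReal (2 * C ^ 2) *
            (ENNReal.ofReal (M ^ 2 / (2 * α) * (1/4 : ℝ) ^ (2 * α)) +
              ∫⁻ ρ in Set.Ioc (0 : ℝ) (1/4), ENNReal.ofReal ((ε ρ) ^ 2 * ρ⁻¹)) :=
  stmt3_general δ ε C α M hC hα hδ0 hδM hεint hrec
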